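/- Buchberger's first criterion: If f, g ∈ ℚ[x₁,...,xₙ] are nonzero and their leading monomials are coprime (lcm(lm(f), lm(g)) = lm(f)·lm(g)), then the S-polynomial S(f,g) reduces to 0 modulo {f, g}. -/

import Mathlib

open MvPolynomial
open scoped MonomialOrder

namespace ModularGB

variable {σ : Type*}

/-- The leading exponent (multidegree) of `f` with respect to the monomial order `m`. -/
noncomputable def mdeg {R : Type*} [CommSemiring R] (m : MonomialOrder σ)
    (f : MvPolynomial σ R) : σ →₀ ℕ :=
  m.toSyn.symm (f.support.sup fun d => m.toSyn d)

/-- The leading coefficient of `f`. -/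
noncomputable def leadCoeff {R : Type*} [CommSemiring R] (m : MonomialOrder σ)
    (f : MvPolynomial σ R) : R :=
  f.coeff (mdeg m f)

/-- The leading term of `f`. -/
noncomputable def leadTerm {R : Type*} [CommSemiring R] (m : MonomialOrder σ)
    (f : MvPolynomial σ R) : MvPolynomial σ R :=
  monomial (mdeg m f) (leadCoeff m f)

/-- `f` reduces to zero upon division by the finite family `G`:
it has a standard representation `f = ∑ qᵢ Gᵢ` with `mdeg (qᵢ Gᵢ) ≼ mdeg f`. -/
def RedZero {R : Type*} [CommSemiring R] (m : MonomialOrder σ) {ι : Type*} [Fintype ι]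
    (G : ι → MvPolynomial σ R) (f : MvPolynomial σ R) : Prop :=
  ∃ q : ι → MvPolynomial σ R,
    f = ∑ i, q i * G i ∧ ∀ i, mdeg m (q i * G i) ≼[m] mdeg m f

/-- The S-polynomial of `f` and `g`. -/
noncomputable def sPoly (m : MonomialOrder σ) {K : Type*} [Field K]
    (f g : MvPolynomial σ K) : MvPolynomial σ K :=
  monomial (mdeg m f ⊔ mdeg m g - mdeg m f) (leadCoeff m f)⁻¹ * f
    - monomial (mdeg m f ⊔ mdeg m g - mdeg m g) (leadCoeff m g)⁻¹ * g

/-- The leading-term ideal of an ideal `I`. -/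
noncomputable def LTIdeal {R : Type*} [CommSemiring R] (m : MonomialOrder σ)
    (I : Ideal (MvPolynomial σ R)) : Ideal (MvPolynomial σ R) :=
  Ideal.span (leadTerm m '' {f | f ∈ I ∧ f ≠ 0})

/-- The family `G` is a Gröbner basis of `I`. -/
def IsGroebner {R : Type*} [CommSemiring R] (m : MonomialOrder σ) {ι : Type*}
    (G : ι → MvPolynomial σ R) (I : Ideal (MvPolynomial σ R)) : Prop :=
  (∀ i, G i ∈ I) ∧ Ideal.span (Set.range fun i => leadTerm m (G i)) = LTIdeal m I

end ModularGB

/-! Write `f = LT(f) + f'` and `g = LT(g) + g'`. When `lm(f)` and `lm(g)` are coprime, `S(f, g)` is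
a nonzero multiple of `LT(g) f - LT(f) g = f' g - g' f`. The leading monomials of `f' g` and `g' f`
cannot coincide: coprimality would force `lm(f) ∣ lm(f')`, whereas `lm(f') ≺ lm(f)`. So nothing
cancels in `f' g - g' f`, which is therefore already a standard representation. -/

namespace ModularGB

open MonomialOrder

variable {σ R : Type*}

section CommSemiring

variable [CommSemiring R] {m : MonomialOrder σ}

theorem mdeg_eq_degree (f : MvPolynomial σ R) : mdeg m f = m.degree f := rfl

theorem leadCoeff_eq_leadingCoeff (f : MvPolynomial σ R) :
    leadCoeff m f = m.leadingCoeff f := rfl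

theorem degree_le_degree_add_of_ne {a b : MvPolynomial σ R}
    (h : a ≠ 0 → b ≠ 0 → m.degree a ≠ m.degree b) :
    m.degree a ≼[m] m.degree (a + b) ∧ m.degree b ≼[m] m.degree (a + b) := by
  by_cases ha : a = 0
  · simp [ha]
  by_cases hb : b = 0
  · simp [hb]
  rw [degree_add_of_ne (h ha hb)]
  exact ⟨le_sup_left, le_sup_right⟩

theorem redZero_pair_of_degree_ne {f g q₁ q₂ : MvPolynomial σ R}
    (h : q₁ * f ≠ 0 → q₂ * g ≠ 0 → m.degree (q₁ * f) ≠ m.degree (q₂ * g)) :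
    RedZero m ![f, g] (q₁ * f + q₂ * g) := by
  refine ⟨![q₁, q₂], by simp [Fin.sum_univ_two], fun i => ?_⟩
  fin_cases i
  · exact (degree_le_degree_add_of_ne h).1
  · exact (degree_le_degree_add_of_ne h).2

theorem RedZero.C_mul {ι : Type*} [Fintype ι] {G : ι → MvPolynomial σ R}
    {p : MvPolynomial σ R} (hp : RedZero m G p) {r : R} (hr : IsRegular r) :
    RedZero m G (C r * p) := by
  obtain ⟨q, hsum, hdeg⟩ := hp
  refine ⟨fun i => C r * q i, ?_, fun i => ?_⟩
  · simp only [hsum, Finset.mul_sum, mul_assoc]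
  · simpa only [mdeg_eq_degree, C_mul', smul_mul_assoc, degree_smul_of_isRegular hr] using hdeg i

end CommSemiring

theorem _root_.Finsupp.le_of_sup_eq_add_of_add_eq_add {a b c d : σ →₀ ℕ}
    (hab : a ⊔ b = a + b) (h : c + b = d + a) : a ≤ c := by
  intro x
  have hx := DFunLike.congr_fun hab x
  have h'x := DFunLike.congr_fun h x
  simp only [Finsupp.sup_apply, Finsupp.add_apply] at hx h'x
  omega

theorem degree_sub_leadingTerm_mul_ne [CommRing R] [NoZeroDivisors R] {m : MonomialOrder σ}
    {f g : MvPolynomial σ R} (hcop : m.degree f ⊔ m.degree g = m.degree f + m.degree g)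
    (hf : f - m.leadingTerm f ≠ 0) (hg : g - m.leadingTerm g ≠ 0) :
    m.degree ((f - m.leadingTerm f) * g) ≠ m.degree ((g - m.leadingTerm g) * f) := by
  have hf₀ : f ≠ 0 := by rintro rfl; simp at hf
  have hg₀ : g ≠ 0 := by rintro rfl; simp at hg
  rw [degree_mul hf hg₀, degree_mul hg hf₀]
  intro h
  have hle : m.degree f ≤ m.degree (f - m.leadingTerm f) :=
    Finsupp.le_of_sup_eq_add_of_add_eq_add hcop h
  exact (degree_sub_leadingTerm_lt_degree (degree_ne_zero_of_sub_leadingTerm_ne_zero hf)).not_ge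
    (m.toSyn_monotone hle)

section Field

variable {K : Type*} [Field K] {m : MonomialOrder σ}

theorem sPoly_eq_of_sup_eq_add {f g : MvPolynomial σ K} (hf : f ≠ 0) (hg : g ≠ 0)
    (hcop : m.degree f ⊔ m.degree g = m.degree f + m.degree g) :
    sPoly m f g = C ((m.leadingCoeff f)⁻¹ * (m.leadingCoeff g)⁻¹) *
      ((f - m.leadingTerm f) * g - (g - m.leadingTerm g) * f) := by
  have monomial_degree : ∀ {p : MvPolynomial σ K} (a : K), p ≠ 0 →
      monomial (m.degree p) a = C (a * (m.leadingCoeff p)⁻¹) * m.leadingTerm p := by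
    intro p a hp
    rw [leadingTerm, C_mul_monomial, inv_mul_cancel_right₀ (m.leadingCoeff_ne_zero_iff.mpr hp)]
  simp only [sPoly, mdeg_eq_degree, leadCoeff_eq_leadingCoeff]
  rw [hcop, add_tsub_cancel_left, add_tsub_cancel_right, monomial_degree _ hg,
    monomial_degree _ hf]
  simp only [map_mul]
  ring

theorem redZero_sPoly_of_sup_eq_add {f g : MvPolynomial σ K} (hf : f ≠ 0) (hg : g ≠ 0)
    (hcop : m.degree f ⊔ m.degree g = m.degree f + m.degree g) :
    RedZero m ![f, g] (sPoly m f g) := by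
  rw [sPoly_eq_of_sup_eq_add hf hg hcop]
  refine RedZero.C_mul ?_ (IsRegular.of_ne_zero ?_)
  · rw [sub_eq_neg_add, ← neg_mul]
    refine redZero_pair_of_degree_ne fun h₁ h₂ => ?_
    rw [neg_mul, degree_neg]
    exact (degree_sub_leadingTerm_mul_ne hcop (left_ne_zero_of_mul h₂)
      (neg_ne_zero.mp (left_ne_zero_of_mul h₁))).symm
  · simp [m.leadingCoeff_ne_zero_iff.mpr hf, m.leadingCoeff_ne_zero_iff.mpr hg]

end Field

end ModularGB

open ModularGB in
/-- Buchberger's first criterion: coprime leading monomials give an S-polynomial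
reducing to zero modulo `{f, g}`. -/
theorem stmt17 {σ : Type*} (m : MonomialOrder σ) (f g : MvPolynomial σ ℚ)
    (hf : f ≠ 0) (hg : g ≠ 0)
    (hcop : mdeg m f ⊔ mdeg m g = mdeg m f + mdeg m g) :
    RedZero m ![f, g] (sPoly m f g) :=
  redZero_sPoly_of_sup_eq_add hf hg hcop
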